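/- arXiv:1109.2469 — 4 statements merged into one kernel-verified Lean document; each statement's English description precedes it below -/
import Mathlib

section
/- The formal power series P(t) = exp(-∑_{k≥1} Tr(a^k) t^k / k), where a = X + X^{-1} in C[Z] and Tr is the constant-term functional, equals (1 + sqrt(1-4t^2))/2 as a formal power series; in particular P satisfies the algebraic equation P^2 - P + t^2 = 0. -/
open PowerSeries

/-- Exponential of a formal power series (with zero constant term):
`expS f = ∑_k f^k / k!`, defined coefficientwise (only `k ≤ n` contribute to the
`n`-th coefficient when `f` has zero constant term). -/
noncomputable def expS (f : PowerSeries ℂ) : PowerSeries ℂ :=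
  PowerSeries.mk fun n =>
    ∑ k ∈ Finset.range (n + 1), (PowerSeries.coeff n (f ^ k)) / (Nat.factorial k)

/-- `a = X + X⁻¹` in the Laurent polynomial algebra `ℂ[ℤ]`. -/
noncomputable def lau : AddMonoidAlgebra ℂ ℤ :=
  AddMonoidAlgebra.single (1 : ℤ) (1 : ℂ) + AddMonoidAlgebra.single (-1 : ℤ) (1 : ℂ)

/-- `P(t) = exp(-∑_{k≥1} Tr(aᵏ) tᵏ / k)` for `a = X + X⁻¹`, where `Tr` is the
constant-term functional. -/
noncomputable def Pser : PowerSeries ℂ :=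
  expS (PowerSeries.mk fun k => if k = 0 then 0 else -((lau ^ k).coeff (0 : ℤ)) / (k : ℂ))

/-!
The constant terms `Tr(aᵏ)` are the coefficients of `C(t) = ∑ₘ binom(2m, m) t^{2m}`, which is
`(1 - 4t²)^{-1/2}`; so the exponent `g` of `P = exp g` satisfies `t g' = 1 - C`. The identities
`(1 - 4t²) C² = 1` and `(1 - 4t²) C' = 4t C` both follow from the recursion
`(n + 1) binom(2n+2, n+1) = 2 (2n + 1) binom(2n, n)`. They show that `Q = (1 + (1 - 4t²) C) / 2`
solves the same linear equation `y' = g' y` as `P`, with the same constant term, hence `P = Q`.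
Finally `(1 - 4t²) C` squares to `1 - 4t²`, and a square root with nonzero constant term is
determined by that constant term.
-/

namespace PowerSeries

variable {R : Type*} [CommRing R]

theorem derivative_expand (p : ℕ) (hp : p ≠ 0) (f : R⟦X⟧) :
    d⁄dX R (expand p hp f) = expand p hp (d⁄dX R f) * ((p : R⟦X⟧) * X ^ (p - 1)) := by
  rw [expand_apply, expand_apply, derivative_subst (HasSubst.X_pow hp), derivative_pow,
    derivative_X, mul_one]

theorem eq_zero_of_derivative_eq_mul [IsAddTorsionFree R] {h f : R⟦X⟧}
    (hf : d⁄dX R f = h * f) (h0 : constantCoeff f = 0) : f = 0 := by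
  ext n
  rw [map_zero]
  induction n using Nat.strong_induction_on with
  | _ n ih =>
  cases n with
  | zero => simpa using h0
  | succ m =>
    have hm : coeff m (h * f) = 0 := by
      rw [coeff_mul]
      refine Finset.sum_eq_zero fun p hp => ?_
      rw [ih p.2 (by have := Finset.HasAntidiagonal.mem_antidiagonal.1 hp; omega), mul_zero]
    have hcoeff := congrArg (coeff m) hf
    rw [coeff_derivative, hm] at hcoeff
    have hsmul : (m + 1) • coeff (m + 1) f = 0 := by
      rw [nsmul_eq_mul]
      push_cast
      linear_combination hcoeff
    exact (nsmul_eq_zero_iff.1 hsmul).resolve_right m.succ_ne_zero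

theorem eq_of_derivative_eq_mul [IsAddTorsionFree R] {h f g : R⟦X⟧}
    (hf : d⁄dX R f = h * f) (hg : d⁄dX R g = h * g) (h0 : constantCoeff f = constantCoeff g) :
    f = g :=
  sub_eq_zero.1 <| eq_zero_of_derivative_eq_mul (h := h)
    (by rw [map_sub, hf, hg, mul_sub]) (by rw [map_sub, h0, sub_self])

theorem eq_of_sq_eq_sq_of_constantCoeff_eq [IsDomain R] [IsAddTorsionFree R] {f g : R⟦X⟧}
    (hsq : f ^ 2 = g ^ 2) (h0 : constantCoeff f = constantCoeff g) (hf : constantCoeff f ≠ 0) :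
    f = g := by
  refine (sq_eq_sq_iff_eq_or_eq_neg.1 hsq).resolve_right fun hneg => hf ?_
  rw [← self_eq_neg]
  conv_rhs => rw [h0, ← map_neg, ← hneg]

variable (R) in
noncomputable def centralBinomSeries : R⟦X⟧ :=
  mk fun n => (n.centralBinom : R)

@[simp]
theorem constantCoeff_centralBinomSeries : constantCoeff (centralBinomSeries R) = 1 := by
  simp [centralBinomSeries, ← coeff_zero_eq_constantCoeff_apply]

theorem one_sub_four_X_mul_derivative_centralBinomSeries :
    (1 - 4 * X) * d⁄dX R (centralBinomSeries R) = 2 * centralBinomSeries R := by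
  suffices d⁄dX R (centralBinomSeries R) =
      2 * centralBinomSeries R + 4 * X * d⁄dX R (centralBinomSeries R) by
    linear_combination this
  ext n
  cases n with
  | zero => simp [centralBinomSeries, coeff_derivative, Nat.centralBinom, map_ofNat constantCoeff]
  | succ m =>
    have key := congrArg (Nat.cast (R := R)) (Nat.succ_mul_centralBinom_succ (m + 1))
    rw [mul_assoc, map_add, ← map_ofNat C 2, ← map_ofNat C 4, coeff_C_mul, coeff_C_mul,
      coeff_succ_X_mul, coeff_derivative, coeff_derivative]
    simp only [centralBinomSeries, coeff_mk]
    push_cast at key ⊢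
    linear_combination key

theorem one_sub_four_X_mul_centralBinomSeries_sq [IsAddTorsionFree R] :
    (1 - 4 * X) * centralBinomSeries R ^ 2 = 1 := by
  apply derivative.ext
  · have h4 : d⁄dX R (4 : R⟦X⟧) = 0 := by rw [← map_ofNat C 4, derivative_C]
    simp only [Derivation.leibniz, derivative_pow, map_sub, Derivation.map_one_eq_zero, h4,
      derivative_X, smul_eq_mul]
    push_cast
    linear_combination
      2 * centralBinomSeries R * one_sub_four_X_mul_derivative_centralBinomSeries (R := R)
  · simp

variable (R) in
noncomputable def evenCentralBinomSeries : R⟦X⟧ :=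
  expand 2 two_ne_zero (centralBinomSeries R)

theorem coeff_evenCentralBinomSeries (n : ℕ) :
    coeff n (evenCentralBinomSeries R) = if 2 ∣ n then ((n / 2).centralBinom : R) else 0 := by
  simp [evenCentralBinomSeries, coeff_expand, centralBinomSeries]

@[simp]
theorem constantCoeff_evenCentralBinomSeries : constantCoeff (evenCentralBinomSeries R) = 1 := by
  simp [evenCentralBinomSeries]

theorem one_sub_four_X_sq_mul_evenCentralBinomSeries_sq [IsAddTorsionFree R] :
    (1 - 4 * X ^ 2) * evenCentralBinomSeries R ^ 2 = 1 := by
  have h := congrArg (expand 2 two_ne_zero) (one_sub_four_X_mul_centralBinomSeries_sq (R := R))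
  rw [evenCentralBinomSeries]
  simpa only [map_mul, map_sub, map_one, map_pow, map_ofNat, expand_X] using h

theorem one_sub_four_X_sq_mul_derivative_evenCentralBinomSeries :
    (1 - 4 * X ^ 2) * d⁄dX R (evenCentralBinomSeries R) = 4 * X * evenCentralBinomSeries R := by
  have h := congrArg (expand 2 two_ne_zero)
    (one_sub_four_X_mul_derivative_centralBinomSeries (R := R))
  simp only [map_mul, map_sub, map_one, map_ofNat, expand_X] at h
  rw [evenCentralBinomSeries, derivative_expand]
  linear_combination 2 * X * h

variable (R) in
noncomputable def sqrtOneSubFourXSq : R⟦X⟧ :=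
  (1 - 4 * X ^ 2) * evenCentralBinomSeries R

@[simp]
theorem constantCoeff_sqrtOneSubFourXSq : constantCoeff (sqrtOneSubFourXSq R) = 1 := by
  simp [sqrtOneSubFourXSq]

theorem sqrtOneSubFourXSq_sq [IsAddTorsionFree R] : sqrtOneSubFourXSq R ^ 2 = 1 - 4 * X ^ 2 := by
  rw [sqrtOneSubFourXSq]
  linear_combination (1 - 4 * X ^ 2) * one_sub_four_X_sq_mul_evenCentralBinomSeries_sq (R := R)

theorem derivative_sqrtOneSubFourXSq :
    d⁄dX R (sqrtOneSubFourXSq R) = -(4 * X * evenCentralBinomSeries R) := by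
  have h4 : d⁄dX R (4 : R⟦X⟧) = 0 := by rw [← map_ofNat C 4, derivative_C]
  rw [sqrtOneSubFourXSq, Derivation.leibniz]
  simp only [map_sub, Derivation.map_one_eq_zero, Derivation.leibniz, derivative_pow, h4,
    derivative_X, smul_eq_mul]
  push_cast
  linear_combination one_sub_four_X_sq_mul_derivative_evenCentralBinomSeries (R := R)

end PowerSeries

theorem lau_pow (k : ℕ) : lau ^ k =
    ∑ j ∈ Finset.range (k + 1), AddMonoidAlgebra.single (2 * j - k : ℤ) (k.choose j : ℂ) := by
  rw [lau, add_pow]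
  refine Finset.sum_congr rfl fun j hj => ?_
  rw [AddMonoidAlgebra.single_pow, AddMonoidAlgebra.single_pow,
    AddMonoidAlgebra.single_mul_single, AddMonoidAlgebra.natCast_def,
    AddMonoidAlgebra.single_mul_single]
  have hjk := Finset.mem_range.1 hj
  congr 1
  · simp only [nsmul_eq_mul, mul_one, mul_neg, add_zero]
    omega
  · simp

theorem lau_pow_coeff_zero (k : ℕ) :
    (lau ^ k).coeff 0 = if 2 ∣ k then ((k / 2).centralBinom : ℂ) else 0 := by
  rw [lau_pow, AddMonoidAlgebra.coeff_sum, Finset.sum_apply']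
  simp only [AddMonoidAlgebra.coeff_single, Finsupp.single_apply]
  split_ifs with hk
  · obtain ⟨m, rfl⟩ := hk
    rw [Finset.sum_eq_single m (fun j _ hj => if_neg (by omega)) (fun h => absurd
      (Finset.mem_range.2 (by omega)) h), if_pos (by omega),
      Nat.mul_div_cancel_left m two_pos, Nat.centralBinom_eq_two_mul_choose]
  · exact Finset.sum_eq_zero fun j _ => if_neg (by omega)

-- `Pser = expS logPser` holds by definition.
noncomputable def logPser : ℂ⟦X⟧ :=
  mk fun k => if k = 0 then 0 else -((lau ^ k).coeff (0 : ℤ)) / (k : ℂ)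

@[simp]
theorem constantCoeff_logPser : constantCoeff logPser = 0 := by
  rw [← coeff_zero_eq_constantCoeff_apply, logPser, coeff_mk, if_pos rfl]

theorem X_mul_derivative_logPser : X * d⁄dX ℂ logPser = 1 - evenCentralBinomSeries ℂ := by
  ext n
  cases n with
  | zero => simp
  | succ m =>
    rw [coeff_succ_X_mul, coeff_derivative, map_sub, logPser, coeff_mk, if_neg m.succ_ne_zero,
      lau_pow_coeff_zero, coeff_one, if_neg m.succ_ne_zero, coeff_evenCentralBinomSeries]
    push_cast
    field_simp
    ring

theorem expS_eq_subst_exp {f : ℂ⟦X⟧} (hf : constantCoeff f = 0) : expS f = (exp ℂ).subst f := by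
  ext n
  rw [expS, coeff_mk, coeff_subst' (HasSubst.of_constantCoeff_zero' hf),
    finsum_eq_sum_of_support_subset (s := Finset.range (n + 1))]
  · refine Finset.sum_congr rfl fun k _ => ?_
    simp [div_eq_inv_mul]
  · refine Function.support_subset_iff'.2 fun k hk => ?_
    simp only [Finset.coe_range, Set.mem_Iio, not_lt] at hk
    rw [coeff_of_lt_order n ((Nat.cast_lt.2 (by omega)).trans_le
      (le_order_pow_of_constantCoeff_eq_zero k hf)), smul_zero]

theorem derivative_expS {f : ℂ⟦X⟧} (hf : constantCoeff f = 0) :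
    d⁄dX ℂ (expS f) = d⁄dX ℂ f * expS f := by
  rw [expS_eq_subst_exp hf, derivative_subst (HasSubst.of_constantCoeff_zero' hf),
    derivative_exp, mul_comm]

@[simp]
theorem constantCoeff_expS (f : ℂ⟦X⟧) : constantCoeff (expS f) = 1 := by
  rw [← coeff_zero_eq_constantCoeff_apply, expS, coeff_mk]
  simp

theorem derivative_sqrtOneSubFourXSq_eq_mul :
    d⁄dX ℂ (sqrtOneSubFourXSq ℂ) = d⁄dX ℂ logPser * (1 + sqrtOneSubFourXSq ℂ) := by
  refine mul_left_cancel₀ (X_ne_zero (R := ℂ)) ?_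
  rw [derivative_sqrtOneSubFourXSq, ← mul_assoc, X_mul_derivative_logPser, sqrtOneSubFourXSq]
  linear_combination one_sub_four_X_sq_mul_evenCentralBinomSeries_sq (R := ℂ)

theorem Pser_eq_half_smul : Pser = (1 / 2 : ℂ) • (1 + sqrtOneSubFourXSq ℂ) := by
  refine eq_of_derivative_eq_mul (h := d⁄dX ℂ logPser) (derivative_expS constantCoeff_logPser)
    ?_ (by norm_num [Pser])
  rw [Derivation.map_smul, map_add, Derivation.map_one_eq_zero, zero_add,
    derivative_sqrtOneSubFourXSq_eq_mul, mul_smul_comm]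

/-- `P(t) = exp(-∑_{k≥1} Tr(aᵏ)tᵏ/k)` equals `(1 + √(1-4t²))/2` as a formal power series
(where `√(1-4t²)` is the square root with constant term `1`); in particular
`P² - P + t² = 0`. -/
theorem Pser_eq_sqrt_form :
    (∀ f : PowerSeries ℂ, f ^ 2 = 1 - 4 * PowerSeries.X ^ 2 →
      PowerSeries.constantCoeff f = 1 → Pser = ((1 : ℂ) / 2) • (1 + f)) ∧
    Pser ^ 2 - Pser + PowerSeries.X ^ 2 = 0 := by
  refine ⟨fun f hf hf1 => ?_, ?_⟩
  · rw [Pser_eq_half_smul, eq_of_sq_eq_sq_of_constantCoeff_eq (hf.trans sqrtOneSubFourXSq_sq.symm)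
      (by simp [hf1]) (by simp [hf1])]
  · have h2 : (2 : ℂ⟦X⟧) * C (1 / 2 : ℂ) = 1 := by
      rw [← map_ofNat C 2, ← map_mul]
      norm_num
    rw [Pser_eq_half_smul, smul_eq_C_mul]
    linear_combination C (1 / 2 : ℂ) ^ 2 * sqrtOneSubFourXSq_sq (R := ℂ) +
      ((1 + sqrtOneSubFourXSq ℂ) * C (1 / 2 : ℂ) - X ^ 2 * (2 * C (1 / 2 : ℂ) + 1)) * h2
end

section
/- In the ring of noncommutative formal power series C<<X,Y>>, there exists a unique element C with zero constant term satisfying C = X(1-C)^{-1}Y, and it equals the sum over all 'irreducible bracketings': C = XY + XXYY + XXYXYY + XXXYYY + ... (the sum over balanced words in X,Y, with X as open and Y as close parenthesis, that are irreducible, i.e. proper prefix sums are positive). -/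
/-- The algebra `ℂ⟪X,Y⟫` of noncommutative formal power series in two variables,
realized as arbitrary functions on the free monoid of words in the alphabet `Fin 2`
(`0 = X`, `1 = Y`), with convolution product. -/
def NCS : Type := List (Fin 2) → ℂ

namespace NCS

instance : AddCommGroup NCS := inferInstanceAs (AddCommGroup (List (Fin 2) → ℂ))

instance : One NCS := ⟨fun w => if w = [] then 1 else 0⟩

noncomputable instance : Mul NCS :=
  ⟨fun f g w => ∑ i ∈ Finset.range (w.length + 1), f (w.take i) * g (w.drop i)⟩

lemma mul_apply (f g : NCS) (w : List (Fin 2)) :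
    (f * g) w = ∑ i ∈ Finset.range (w.length + 1), f (w.take i) * g (w.drop i) := rfl

lemma add_apply (f g : NCS) (w : List (Fin 2)) : (f + g) w = f w + g w := rfl
lemma zero_apply (w : List (Fin 2)) : (0 : NCS) w = 0 := rfl
lemma one_apply (w : List (Fin 2)) : (1 : NCS) w = if w = [] then 1 else 0 := rfl

noncomputable instance : Ring NCS where
  __ := (inferInstance : AddCommGroup NCS)
  __ := (inferInstance : One NCS)
  __ := (inferInstance : Mul NCS)
  left_distrib f g h := by
    funext w
    simp [mul_apply, add_apply, mul_add, Finset.sum_add_distrib]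
  right_distrib f g h := by
    funext w
    simp [mul_apply, add_apply, add_mul, Finset.sum_add_distrib]
  zero_mul f := by funext w; simp [mul_apply, zero_apply]
  mul_zero f := by funext w; simp [mul_apply, zero_apply]
  one_mul f := by
    funext w
    rw [mul_apply, Finset.sum_eq_single 0]
    · simp [one_apply]
    · intro i hi hne
      rw [one_apply, if_neg, zero_mul]
      intro h
      rcases List.take_eq_nil_iff.mp h with h1 | h1
      · exact hne h1
      · simp [h1, Finset.mem_range] at hi
        exact hne (by omega)
    · intro h; simp at h
  mul_one f := by
    funext w
    rw [mul_apply, Finset.sum_eq_single w.length]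
    · simp [one_apply]
    · intro i hi hne
      rw [one_apply, if_neg, mul_zero]
      intro h
      have := List.drop_eq_nil_iff.mp h
      simp [Finset.mem_range] at hi
      exact hne (by omega)
    · intro h; simp at h
  mul_assoc f g h := by
    funext w
    rw [mul_apply, mul_apply]
    have L1 : ∀ j ∈ Finset.range (w.length + 1), (f * g) (w.take j) * h (w.drop j)
        = ∑ i ∈ Finset.range (j + 1),
            f (w.take i) * (g ((w.drop i).take (j - i)) * h (w.drop j)) := by
      intro j hj
      simp only [Finset.mem_range] at hj
      rw [mul_apply, List.length_take, min_eq_left (by omega), Finset.sum_mul]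
      refine Finset.sum_congr rfl fun i hi => ?_
      simp only [Finset.mem_range] at hi
      rw [List.take_take, min_eq_left (by omega), List.drop_take, mul_assoc]
    have R1 : ∀ i ∈ Finset.range (w.length + 1), f (w.take i) * (g * h) (w.drop i)
        = ∑ j ∈ Finset.Ico i (w.length + 1),
            f (w.take i) * (g ((w.drop i).take (j - i)) * h (w.drop j)) := by
      intro i hi
      simp only [Finset.mem_range] at hi
      rw [mul_apply, List.length_drop, Finset.mul_sum, Finset.sum_Ico_eq_sum_range]
      have hni : w.length + 1 - i = w.length - i + 1 := by omega
      rw [hni]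
      refine Finset.sum_congr rfl fun l hl => ?_
      simp only [Finset.mem_range] at hl
      have h1 : i + l - i = l := by omega
      rw [h1, List.drop_drop]
    rw [Finset.sum_congr rfl L1, Finset.sum_congr rfl R1]
    simp only [Finset.range_eq_Ico]
    first
      | exact Finset.sum_Ico_Ico_comm ..
      | rw [← Finset.sum_Ico_Ico_comm]

end NCS

/-- The variable `X` in `ℂ⟪X,Y⟫`. -/
noncomputable def Xv : NCS := fun w => if w = [0] then 1 else 0

/-- The variable `Y` in `ℂ⟪X,Y⟫`. -/
noncomputable def Yv : NCS := fun w => if w = [1] then 1 else 0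

/-- A word in `{X = 0, Y = 1}` is an irreducible bracketing: it is nonempty, balanced
(as many `X`'s as `Y`'s), and every proper nonempty prefix has strictly more `X`'s
than `Y`'s. -/
def Irred (w : List (Fin 2)) : Prop :=
  w ≠ [] ∧ w.count 0 = w.count 1 ∧
    ∀ i, 0 < i → i < w.length → (w.take i).count 1 < (w.take i).count 0

/-!
A nonempty Dyck word splits uniquely, at its first return to height zero, as `u ++ v` with `u`
irreducible and `v` a Dyck word; and the irreducible words are exactly the words `X u Y` with
`u` a Dyck word. For the series `C₀`, `D₀` of irreducible and of Dyck words (`irredSeries`,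
`dyckSeries`) this says `(1 - C₀) D₀ = 1` and `C₀ = X D₀ Y`.

Everything else is a contraction argument: multiplying by a series without constant term raises
the order of vanishing, so `f = a f b` with `a [] = 0` forces `f = 0`. This makes one-sided
inverses of `1 - c` two-sided, and for two solutions `C, C'` with `D = (1 - C)⁻¹`,
`D' = (1 - C')⁻¹` it applies to `C - C' = X D' (C - C') D Y`.
-/

namespace NCS

lemma Xv_mul_apply (f : NCS) (w : List (Fin 2)) :
    (Xv * f) w = if w.head? = some 0 then f w.tail else 0 := by
  rcases w with _ | ⟨a, t⟩
  · simp [NCS.mul_apply, Xv]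
  rw [NCS.mul_apply, Finset.sum_eq_single_of_mem 1 (by simp)]
  · fin_cases a <;> simp [Xv]
  · intro i hi hi1
    have hne : (a :: t).take i ≠ [0] := fun h => by
      have := congrArg List.length h
      simp only [List.length_take, List.length_cons, List.length_nil] at this
      rw [Finset.mem_range, List.length_cons] at hi
      omega
    simp [Xv, hne]

lemma mul_Yv_apply (f : NCS) (w : List (Fin 2)) :
    (f * Yv) w = if w.getLast? = some 1 then f w.dropLast else 0 := by
  obtain rfl | ⟨u, a, rfl⟩ := List.eq_nil_or_concat w
  · simp [NCS.mul_apply, Yv]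
  rw [List.concat_eq_append, NCS.mul_apply, Finset.sum_eq_single_of_mem u.length (by simp)]
  · fin_cases a <;> simp [Yv]
  · intro i hi hiu
    have hne : (u ++ [a]).drop i ≠ [1] := fun h => by
      have := congrArg List.length h
      simp only [List.length_drop, List.length_append, List.length_singleton] at this
      rw [Finset.mem_range] at hi
      omega
    simp [Yv, hne]

def VanishesBelow (n : ℕ) (f : NCS) : Prop :=
  ∀ w : List (Fin 2), w.length < n → f w = 0

lemma vanishesBelow_zero (f : NCS) : VanishesBelow 0 f := fun _ h => absurd h (Nat.not_lt_zero _)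

lemma vanishesBelow_one_iff {f : NCS} : VanishesBelow 1 f ↔ f [] = 0 :=
  ⟨fun h => h [] Nat.one_pos, fun h w hw => by
    rwa [List.length_eq_zero_iff.1 (Nat.lt_one_iff.1 hw)]⟩

lemma VanishesBelow.mul {m n : ℕ} {f g : NCS} (hf : VanishesBelow m f) (hg : VanishesBelow n g) :
    VanishesBelow (m + n) (f * g) := fun w hw => by
  refine Finset.sum_eq_zero fun i hiw => ?_
  rw [Finset.mem_range] at hiw
  rcases lt_or_ge i m with hi | hi
  · rw [hf _ (by simp only [List.length_take, inf_lt_iff]; omega), zero_mul]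
  · rw [hg _ (by simp only [List.length_drop]; omega), mul_zero]

lemma eq_zero_of_eq_mul_mul {a b f : NCS} (ha : a [] = 0) (h : f = a * f * b) : f = 0 := by
  have hvan : ∀ n, VanishesBelow n f := fun n => by
    induction n with
    | zero => exact vanishesBelow_zero f
    | succ n ih =>
      rw [h, add_comm, ← add_zero (1 + n)]
      exact ((vanishesBelow_one_iff.2 ha).mul ih).mul (vanishesBelow_zero b)
  funext w
  exact hvan (w.length + 1) w w.length.lt_succ_self

lemma mul_one_sub_eq_one {c d : NCS} (hc : c [] = 0) (h : (1 - c) * d = 1) :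
    d * (1 - c) = 1 := by
  have hfix : d * (1 - c) - 1 = c * (d * (1 - c) - 1) * 1 := by
    have h0 : (1 - c) * (d * (1 - c) - 1) = 0 := by
      rw [mul_sub, ← mul_assoc, h, one_mul, mul_one, sub_self]
    rwa [sub_mul, one_mul, sub_eq_zero, ← mul_one (c * _)] at h0
  exact sub_eq_zero.mp (eq_zero_of_eq_mul_mul hc hfix)

lemma eq_of_eq_Xv_mul_mul_Yv {C C' D D' : NCS} (hC : C = Xv * D * Yv) (hD : (1 - C) * D = 1)
    (hC' : C' = Xv * D' * Yv) (hD' : D' * (1 - C') = 1) : C = C' := by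
  have hdiff : D - D' = D' * (C - C') * D :=
    calc D - D' = D' * (1 - C') * D - D' * ((1 - C) * D) := by rw [hD', hD, one_mul, mul_one]
      _ = D' * (C - C') * D := by noncomm_ring
  have hfix : C - C' = (Xv * D') * (C - C') * (D * Yv) :=
    calc C - C' = Xv * (D - D') * Yv := by rw [hC, hC', mul_sub, sub_mul]
      _ = (Xv * D') * (C - C') * (D * Yv) := by rw [hdiff]; simp only [mul_assoc]
  exact sub_eq_zero.mp (eq_zero_of_eq_mul_mul (by simp [Xv_mul_apply]) hfix)

end NCS

def Dyck (w : List (Fin 2)) : Prop :=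
  w.count 0 = w.count 1 ∧ ∀ i, (w.take i).count 1 ≤ (w.take i).count 0

lemma dyck_nil : Dyck [] := ⟨rfl, fun i => by simp⟩

section Words

variable {u v w : List (Fin 2)}

lemma Irred.dyck (h : Irred w) : Dyck w := by
  refine ⟨h.2.1, fun i => ?_⟩
  rcases lt_or_ge i w.length with hi | hi
  · rcases Nat.eq_zero_or_pos i with rfl | hpos
    · simp
    · exact (h.2.2 i hpos hi).le
  · rw [List.take_of_length_le hi]
    exact h.2.1.ge

lemma Dyck.append (hu : Dyck u) (hv : Dyck v) : Dyck (u ++ v) := by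
  refine ⟨by simp only [List.count_append, hu.1, hv.1], fun i => ?_⟩
  rw [List.take_append]
  simp only [List.count_append]
  exact Nat.add_le_add (hu.2 i) (hv.2 _)

lemma Dyck.drop (hw : Dyck w) {k : ℕ} (hk : (w.take k).count 0 = (w.take k).count 1) :
    Dyck (w.drop k) := by
  have hsplit : ∀ a, (w.take k).count a + (w.drop k).count a = w.count a := fun a => by
    rw [← List.count_append, List.take_append_drop]
  refine ⟨by have := hsplit 0; have := hsplit 1; have := hw.1; omega, fun i => ?_⟩
  have := hw.2 (k + i)
  rw [List.take_add, List.count_append, List.count_append] at this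
  omega

lemma Irred.eq_of_prefix (hu : Irred u) (hv : Irred v) (huv : u <+: v) : u = v := by
  refine huv.eq_of_length_le (not_lt.mp fun hlt => ?_)
  have := hv.2.2 u.length (List.length_pos_iff.mpr hu.1) hlt
  rw [← List.prefix_iff_eq_take.mp huv, hu.2.1] at this
  exact lt_irrefl _ this

lemma Irred.take_inj {j k : ℕ} (hj : Irred (w.take j)) (hk : Irred (w.take k))
    (hjw : j ≤ w.length) (hkw : k ≤ w.length) : j = k := by
  have h : w.take j = w.take k := by
    rcases le_total j k with hjk | hkj
    · exact hj.eq_of_prefix hk (List.take_prefix_take_left hjk)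
    · exact (hk.eq_of_prefix hj (List.take_prefix_take_left hkj)).symm
  simpa [hjw, hkw] using congrArg List.length h

lemma Dyck.exists_irred_take (hw : Dyck w) (hne : w ≠ []) :
    ∃ k ≤ w.length, Irred (w.take k) := by
  have hex : ∃ k, 0 < k ∧ (w.take k).count 0 = (w.take k).count 1 :=
    ⟨w.length, List.length_pos_iff.mpr hne, by rw [List.take_length]; exact hw.1⟩
  obtain ⟨hpos, hbal⟩ := Nat.find_spec hex
  refine ⟨Nat.find hex, Nat.find_min' hex ⟨List.length_pos_iff.mpr hne, by
    rw [List.take_length]; exact hw.1⟩, by simp [List.take_eq_nil_iff, hne, hpos.ne'], hbal,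
    fun i hi hlt => ?_⟩
  have hik : i < Nat.find hex := lt_of_lt_of_le hlt (by simp)
  rw [List.take_take, min_eq_left hik.le]
  exact lt_of_le_of_ne (hw.2 i) fun h => Nat.find_min hex hik ⟨hi, h.symm⟩

lemma irred_cons_append_iff : Irred (0 :: u ++ [1]) ↔ Dyck u := by
  have htake : ∀ i ≤ u.length, (0 :: u ++ [1]).take (i + 1) = 0 :: u.take i := fun i hi => by
    simp [List.take_append_of_le_length hi]
  have hlength : (0 :: u ++ [1]).length = u.length + 2 := by simp
  constructor
  · rintro ⟨-, hbal, hpre⟩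
    refine ⟨by simpa using hbal, fun i => ?_⟩
    rcases le_or_gt i u.length with hi | hi
    · have := hpre (i + 1) i.succ_pos (by simp only [hlength]; omega)
      rw [htake i hi, List.count_cons_self, List.count_cons_of_ne zero_ne_one] at this
      omega
    · rw [List.take_of_length_le hi.le]
      simpa using hbal.ge
  · intro hu
    refine ⟨by simp, by simpa using hu.1, fun i hi hlt => ?_⟩
    obtain ⟨j, rfl⟩ := Nat.exists_eq_add_one_of_ne_zero hi.ne'
    rw [htake j (by rw [hlength] at hlt; omega)]
    simpa [Nat.lt_succ_iff] using hu.2 j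

lemma Irred.exists_eq_cons_append (h : Irred w) : ∃ u, w = 0 :: u ++ [1] := by
  obtain ⟨hne, hbal, hpre⟩ := h
  obtain ⟨v, b, rfl⟩ := (List.eq_nil_or_concat w).resolve_left hne
  rw [List.concat_eq_append] at hbal hpre ⊢
  obtain ⟨a, u, rfl⟩ := List.exists_cons_of_ne_nil (l := v) (by
    rintro rfl
    fin_cases b <;> simp at hbal)
  have hfirst := hpre 1 Nat.one_pos (by simp)
  have hlast := hpre (u.length + 1) (by omega) (by simp)
  rw [List.take_append_of_le_length (by simp)] at hfirst hlast
  rw [List.take_of_length_le (by simp)] at hlast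
  have ha : a = 0 := by fin_cases a <;> simp_all
  subst ha
  obtain rfl | rfl : b = 0 ∨ b = 1 := by omega
  · have h01 : [(0 : Fin 2)].count 1 = 0 := rfl
    rw [List.count_append, List.count_append, List.count_singleton_self, h01] at hbal
    omega
  · exact ⟨u, rfl⟩

end Words

open scoped Classical in
noncomputable def dyckSeries : NCS := fun w => if Dyck w then 1 else 0

open scoped Classical in
noncomputable def irredSeries : NCS := fun w => if Irred w then 1 else 0

lemma irredSeries_nil : irredSeries [] = 0 := if_neg fun h => h.1 rfl

lemma irredSeries_mul_dyckSeries_apply {w : List (Fin 2)} (hne : w ≠ []) :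
    (irredSeries * dyckSeries) w = dyckSeries w := by
  rw [NCS.mul_apply]
  by_cases hw : Dyck w
  · obtain ⟨k, hkw, hk⟩ := hw.exists_irred_take hne
    rw [Finset.sum_eq_single_of_mem k (Finset.mem_range.2 (Nat.lt_succ_of_le hkw))]
    · simp [irredSeries, dyckSeries, hk, hw.drop hk.2.1, hw]
    · intro j hj hjk
      have hj' : ¬ Irred (w.take j) := fun hj' =>
        hjk (hj'.take_inj hk (Nat.le_of_lt_succ (Finset.mem_range.1 hj)) hkw)
      simp [irredSeries, hj']
  · refine (Finset.sum_eq_zero fun j _ => ?_).trans (if_neg hw).symm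
    unfold irredSeries dyckSeries
    split_ifs with hj hj'
    · exact absurd (List.take_append_drop j w ▸ hj.dyck.append hj') hw
    all_goals simp

lemma one_sub_irredSeries_mul_dyckSeries : (1 - irredSeries) * dyckSeries = 1 := by
  funext w
  rw [sub_mul, one_mul]
  show dyckSeries w - (irredSeries * dyckSeries) w = (1 : NCS) w
  rw [NCS.one_apply]
  rcases eq_or_ne w [] with rfl | hne
  · simp [NCS.mul_apply, irredSeries_nil, dyckSeries, dyck_nil]
  · rw [irredSeries_mul_dyckSeries_apply hne, sub_self, if_neg hne]

open scoped Classical in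
lemma irredSeries_eq_Xv_mul_dyckSeries_mul_Yv : irredSeries = Xv * dyckSeries * Yv := by
  funext w
  rw [NCS.mul_Yv_apply]
  split_ifs with hlast
  · obtain ⟨v, rfl⟩ := List.getLast?_eq_some_iff.1 hlast
    rw [List.dropLast_concat, NCS.Xv_mul_apply]
    split_ifs with hhead
    · obtain ⟨u, rfl⟩ := List.head?_eq_some_iff.1 hhead
      exact if_congr irred_cons_append_iff rfl rfl
    · refine if_neg fun h => hhead ?_
      obtain ⟨u, hu⟩ := h.exists_eq_cons_append
      simp [List.append_cancel_right hu]
  · refine if_neg fun h => hlast ?_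
    obtain ⟨u, rfl⟩ := h.exists_eq_cons_append
    exact List.getLast?_concat

open scoped Classical in
/-- In `ℂ⟪X,Y⟫` there is a unique element `C` with zero constant term satisfying
`C = X·(1-C)⁻¹·Y`, and its coefficients are: `1` on nonempty irreducible balanced
(Dyck) words and `0` elsewhere, i.e. `C = XY + XXYY + XXYXYY + XXXYYY + ⋯`. -/
theorem exists_unique_irreducible_bracketing_series :
    (∃! C : NCS, C [] = 0 ∧
        ∃ D : NCS, (1 - C) * D = 1 ∧ D * (1 - C) = 1 ∧ C = Xv * D * Yv) ∧
    ∀ C : NCS, (C [] = 0 ∧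
        ∃ D : NCS, (1 - C) * D = 1 ∧ D * (1 - C) = 1 ∧ C = Xv * D * Yv) →
      ∀ w, C w = if Irred w then 1 else 0 := by
  have hD : (1 - irredSeries) * dyckSeries = 1 := one_sub_irredSeries_mul_dyckSeries
  have hD' : dyckSeries * (1 - irredSeries) = 1 := NCS.mul_one_sub_eq_one irredSeries_nil hD
  have hsol : irredSeries [] = 0 ∧ ∃ D : NCS, (1 - irredSeries) * D = 1 ∧
      D * (1 - irredSeries) = 1 ∧ irredSeries = Xv * D * Yv :=
    ⟨irredSeries_nil, dyckSeries, hD, hD', irredSeries_eq_Xv_mul_dyckSeries_mul_Yv⟩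
  have huniq : ∀ C : NCS, (C [] = 0 ∧ ∃ D : NCS, (1 - C) * D = 1 ∧ D * (1 - C) = 1 ∧
      C = Xv * D * Yv) → C = irredSeries := by
    rintro C ⟨-, D, hCD, -, hC⟩
    exact NCS.eq_of_eq_Xv_mul_mul_Yv hC hCD irredSeries_eq_Xv_mul_dyckSeries_mul_Yv hD'
  exact ⟨⟨irredSeries, hsol, huniq⟩, fun C hC w => by rw [huniq C hC]; rfl⟩
end

section
/- Let X, Y be invertible elements of a (noncommutative) ring, and define the 2×2 block matrices L(t) and V(t) over the ring localized at t (t a central invertible parameter): L(t) = [[Y^{-1}+X, tY+Y^{-1}X^{-1}+X^{-1}+1],[Y^{-1}+t^{-1}X, Y+Y^{-1}X^{-1}+X^{-1}+t^{-1}]] and V(t) = [[X(1+X+Y)^{-1}X(1+Y^{-1})^{-1}, tX(1+X+Y)^{-1}Y],[X(1+Y^{-1})^{-1}X(1+X+Y)^{-1}, XY(1+X+Y)^{-1}]]. Let (X', Y') := (XYX^{-1}, (1+Y^{-1})X^{-1}) and L'(t) the matrix L(t) with X,Y replaced by X',Y'. Then, assuming 1+Y^{-1}, 1+X+Y are invertible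 (and the needed inverses exist), V(t)·L(t) = L'(t)·V(t). -/
set_option maxHeartbeats 2000000

private theorem lax_aux {R : Type*} [Ring R] (t ti x y xi yi a b : R)
    (htc : ∀ r : R, t * r = r * t)
    (htt : t * ti = 1) (hti : ti * t = 1)
    (hx : x * xi = 1) (hxi : xi * x = 1)
    (hy : y * yi = 1) (hyi : yi * y = 1)
    (ha : a * (1 + x + y) = 1) (ha' : (1 + x + y) * a = 1)
    (hb : b * (1 + yi) = 1) (hb' : (1 + yi) * b = 1) :
    (!![x * a * x * b, t * x * a * y;
        x * b * x * a, x * y * a] : Matrix (Fin 2) (Fin 2) R) *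
      !![yi + x, t * y + yi * xi + xi + 1;
         yi + ti * x, y + yi * xi + xi + ti] =
    !![x * b + x * y * xi, t * ((1 + yi) * xi) + x * b * (x * yi * xi) + x * yi * xi + 1;
       x * b + ti * (x * y * xi), (1 + yi) * xi + x * b * (x * yi * xi) + x * yi * xi + ti] *
      !![x * a * x * b, t * x * a * y;
         x * b * x * a, x * y * a] := by
  have htic : ∀ r : R, ti * r = r * ti := by
    intro r
    have : ti * (t * r) * ti = ti * (r * t) * ti := by rw [htc]
    calc ti * r = ti * r * (t * ti) := by rw [htt, mul_one]
      _ = ti * (r * t) * ti := by noncomm_ring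
      _ = ti * (t * r) * ti := by rw [htc]
      _ = r * ti := by rw [← mul_assoc, hti, one_mul]
  -- head-form cancellation lemmas
  have cx : ∀ z : R, x * (xi * z) = z := fun z => by rw [← mul_assoc, hx, one_mul]
  have cxi : ∀ z : R, xi * (x * z) = z := fun z => by rw [← mul_assoc, hxi, one_mul]
  have cy : ∀ z : R, y * (yi * z) = z := fun z => by rw [← mul_assoc, hy, one_mul]
  have cyi : ∀ z : R, yi * (y * z) = z := fun z => by rw [← mul_assoc, hyi, one_mul]
  have ct : ∀ z : R, t * (ti * z) = z := fun z => by rw [← mul_assoc, htt, one_mul]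
  have cti : ∀ z : R, ti * (t * z) = z := fun z => by rw [← mul_assoc, hti, one_mul]
  -- b rules
  have hby : b * y = y - b := by
    linear_combination (norm := noncomm_ring) hb * y - b * hyi
  have hyb : y * b = y - b := by
    linear_combination (norm := noncomm_ring) y * hb' - hy * b
  have hbyi : b * yi = 1 - b := by
    linear_combination (norm := noncomm_ring) hb
  have hyib : yi * b = 1 - b := by
    linear_combination (norm := noncomm_ring) hb'
  have cby : ∀ z : R, b * (y * z) = y * z - b * z := fun z => by
    rw [← mul_assoc, hby, sub_mul]
  have cyb : ∀ z : R, y * (b * z) = y * z - b * z := fun z => by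
    rw [← mul_assoc, hyb, sub_mul]
  have cbyi : ∀ z : R, b * (yi * z) = z - b * z := fun z => by
    rw [← mul_assoc, hbyi, sub_mul, one_mul]
  have cyib : ∀ z : R, yi * (b * z) = z - b * z := fun z => by
    rw [← mul_assoc, hyib, sub_mul, one_mul]
  -- a rules, stage 1 : eliminate a*x, x*a
  have hax : a * x = 1 - a - a * y := by
    linear_combination (norm := noncomm_ring) ha
  have hxa : x * a = 1 - a - y * a := by
    linear_combination (norm := noncomm_ring) ha'
  have cax : ∀ z : R, a * (x * z) = z - a * z - a * (y * z) := fun z => by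
    rw [← mul_assoc, hax, sub_mul, sub_mul, one_mul, mul_assoc]
  have cxa : ∀ z : R, x * (a * z) = z - a * z - y * (a * z) := fun z => by
    rw [← mul_assoc, hxa, sub_mul, sub_mul, one_mul, mul_assoc]
  -- a rules, stage 2 : eliminate a*y, y*a
  have hay : a * y = 1 - a - a * x := by
    linear_combination (norm := noncomm_ring) ha
  have hya : y * a = 1 - a - x * a := by
    linear_combination (norm := noncomm_ring) ha'
  have cay : ∀ z : R, a * (y * z) = z - a * z - a * (x * z) := fun z => by
    rw [← mul_assoc, hay, sub_mul, sub_mul, one_mul, mul_assoc]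
  have cya : ∀ z : R, y * (a * z) = z - a * z - x * (a * z) := fun z => by
    rw [← mul_assoc, hya, sub_mul, sub_mul, one_mul, mul_assoc]
  -- t-commutation
  have mt : ∀ u z : R, u * (t * z) = t * (u * z) := fun u z => by
    rw [← mul_assoc, ← htc u, mul_assoc]
  have mt' : ∀ u : R, u * t = t * u := fun u => (htc u).symm
  have mti : ∀ u z : R, u * (ti * z) = ti * (u * z) := fun u z => by
    rw [← mul_assoc, ← htic u, mul_assoc]
  have mti' : ∀ u : R, u * ti = ti * u := fun u => (htic u).symm
  rw [Matrix.mul_fin_two, Matrix.mul_fin_two]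
  refine Matrix.ext fun i j => ?_
  fin_cases i <;> fin_cases j <;>
    simp only [Matrix.cons_val', Matrix.cons_val_zero, Matrix.cons_val_one, Matrix.head_cons,
      Matrix.empty_val', Matrix.cons_val_fin_one, Matrix.head_fin_const, Matrix.of_apply,
      Fin.mk_zero, Fin.mk_one, Fin.isValue] <;>
  · simp only [mul_add, add_mul, mul_sub, sub_mul, mul_one, one_mul, mul_assoc,
      mt x, mt y, mt xi, mt yi, mt a, mt b, mt' x, mt' y, mt' xi, mt' yi, mt' a, mt' b,
      mti x, mti y, mti xi, mti yi, mti a, mti b, mti' x, mti' y, mti' xi, mti' yi, mti' a, mti' b,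
      ct, cti, htt, hti, cx, cxi, cy, cyi, hx, hxi, hy, hyi,
      cby, cyb, cbyi, cyib, hby, hyb, hbyi, hyib,
      cax, cxa, hax, hxa]
    simp only [mul_add, add_mul, mul_sub, sub_mul, mul_one, one_mul, mul_assoc,
      mt x, mt y, mt xi, mt yi, mt a, mt b, mt' x, mt' y, mt' xi, mt' yi, mt' a, mt' b,
      mti x, mti y, mti xi, mti yi, mti a, mti b, mti' x, mti' y, mti' xi, mti' yi, mti' a, mti' b,
      ct, cti, htt, hti, cx, cxi, cy, cyi, hx, hxi, hy, hyi,
      cby, cyb, cbyi, cyib, hby, hyb, hbyi, hyib,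
      cay, cya, hay, hya]
    abel

/-- The Lax matrix identity for the Kontsevich–Duzhin map
`S₋₁ : (X,Y) ↦ (XYX⁻¹, (1+Y⁻¹)X⁻¹)`: with `L(t)`, `V(t)` the displayed `2×2` matrices
over a noncommutative ring `R` (with `t` a central invertible parameter, and `X`, `Y`,
`1+Y⁻¹`, `1+X+Y` invertible), and `L'(t)` the matrix `L(t)` with `(X,Y)` replaced by
`S₋₁(X,Y)`, one has `V(t)·L(t) = L'(t)·V(t)`. -/
theorem lax_matrix_identity {R : Type*} [Ring R] (t X Y : R)
    [Invertible t] [Invertible X] [Invertible Y]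
    [Invertible (1 + ⅟Y)] [Invertible (1 + X + Y)]
    (ht : ∀ r : R, Commute t r) :
    let X' := X * Y * ⅟X
    let Y' := (1 + ⅟Y) * ⅟X
    -- the inverses of `X'` and `Y'`:
    let Xi' := X * ⅟Y * ⅟X
    let Yi' := X * ⅟(1 + ⅟Y)
    let L : Matrix (Fin 2) (Fin 2) R :=
      !![⅟Y + X, t * Y + ⅟Y * ⅟X + ⅟X + 1;
         ⅟Y + ⅟t * X, Y + ⅟Y * ⅟X + ⅟X + ⅟t]
    let V : Matrix (Fin 2) (Fin 2) R :=
      !![X * ⅟(1 + X + Y) * X * ⅟(1 + ⅟Y), t * X * ⅟(1 + X + Y) * Y;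
         X * ⅟(1 + ⅟Y) * X * ⅟(1 + X + Y), X * Y * ⅟(1 + X + Y)]
    let L' : Matrix (Fin 2) (Fin 2) R :=
      !![Yi' + X', t * Y' + Yi' * Xi' + Xi' + 1;
         Yi' + ⅟t * X', Y' + Yi' * Xi' + Xi' + ⅟t]
    V * L = L' * V := by
  exact lax_aux t (⅟t) X Y (⅟X) (⅟Y) (⅟(1 + X + Y)) (⅟(1 + ⅟Y))
    (fun r => (ht r).eq) (mul_invOf_self t) (invOf_mul_self t)
    (mul_invOf_self X) (invOf_mul_self X) (mul_invOf_self Y) (invOf_mul_self Y)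
    (invOf_mul_self (1 + X + Y)) (mul_invOf_self (1 + X + Y))
    (invOf_mul_self (1 + ⅟Y)) (mul_invOf_self (1 + ⅟Y))
end

section
/- Let f(t) = sqrt(1 - 4t^2) ∈ 1 + t^2 Q[[t]] (the unique square root with constant term 1), let P(t) = (f+1)/2, and let F(t) = ∑_{k≥1} binomial(2k,k) t^{2k}. Then -t P'(t)/P(t) = F(t); i.e. P = exp(-∑_k Tr(a^k)t^k/k) for a = X + X^{-1}. -/
open PowerSeries

lemma central_key (m : ℕ) :
    ((2*(m+1)).choose (m+1) : ℚ) * (2*(m+1)) = 4*(2*m+1) * ((2*m).choose m) := by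
  have h := Nat.succ_mul_centralBinom_succ m
  unfold Nat.centralBinom at h
  have h2 : ((m+1 : ℕ) : ℚ) * ((2*(m+1)).choose (m+1)) = 2*(2*m+1)*((2*m).choose m) := by
    exact_mod_cast congrArg (Nat.cast : ℕ → ℚ) h
  push_cast at h2 ⊢
  linarith

noncomputable def gser : PowerSeries ℚ := mk fun k => if Even k then (k.choose (k/2) : ℚ) else 0

lemma gser_ode : (1 - 4 * X ^ 2) * (d⁄dX ℚ) gser = 4 * (X * gser) := by
  have hC4 : (4 : ℚ⟦X⟧) = C (4:ℚ) := by simp [map_ofNat]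
  ext n
  rw [sub_mul, one_mul, map_sub, show (4:ℚ⟦X⟧)*X^2*(d⁄dX ℚ gser)
      = C (4:ℚ) * (X^2 * d⁄dX ℚ gser) by rw [← hC4]; ring,
    show (4:ℚ⟦X⟧)*(X*gser) = C (4:ℚ) * (X^1 * gser) by rw [← hC4]; ring,
    coeff_C_mul, coeff_C_mul, coeff_X_pow_mul', coeff_X_pow_mul', coeff_derivative]
  match n with
  | 0 => simp [gser, Nat.not_even_one]
  | 1 => norm_num [gser]
  | (n+2) =>
    rw [if_pos (by omega), if_pos (by omega)]
    simp only [show n+2-2 = n from rfl, show n+2-1 = n+1 by omega, coeff_derivative, gser,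
      coeff_mk]
    rcases Nat.even_or_odd n with he | ho
    · have h1 : ¬ Even (n+3) := by simp [Nat.even_add_one, Nat.even_add, he]
      have h2 : ¬ Even (n+1) := by simp [Nat.even_add_one, he]
      simp [h1, h2]
    · obtain ⟨m, rfl⟩ := ho
      have h1 : Even (2*m+1+3) := ⟨m+2, by omega⟩
      have h2 : Even (2*m+1+1) := ⟨m+1, by omega⟩
      rw [if_pos (by exact_mod_cast h1 : Even (2*m+1+2+1)), if_pos h2,
        show (2*m+1+2+1) = 2*(m+2) by omega, show (2*(m+2))/2 = m+2 by omega,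
        show (2*m+1+1) = 2*(m+1) by omega, show (2*(m+1))/2 = m+1 by omega]
      have hk := central_key (m+1)
      push_cast at hk ⊢
      linarith

lemma gser_const : constantCoeff gser = 1 := by
  rw [← coeff_zero_eq_constantCoeff]
  simp [gser]

/-- In `ℚ[[t]]`, let `f` be the power series with `f² = 1 - 4t²` and `f(0) = 1`, and
`P = (1+f)/2`. Then `t·P'(t) + F(t)·P(t) = 0`, where `F(t) = ∑_{k≥1} C(2k,k)t²ᵏ`
(i.e. `F(t) = ∑_{k≥1} Tr(aᵏ)tᵏ` for `a = X + X⁻¹`); equivalently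
`P = exp(-∑_{k≥1} Tr(aᵏ)tᵏ/k)`. -/
theorem sqrt_series_log_derivative (f P : PowerSeries ℚ)
    (hf : f ^ 2 = 1 - 4 * PowerSeries.X ^ 2) (hf0 : PowerSeries.constantCoeff f = 1)
    (hP : P = ((1 : ℚ) / 2) • (1 + f)) :
    PowerSeries.X * (d⁄dX ℚ) P +
      (PowerSeries.mk fun k =>
        if Even k ∧ k ≠ 0 then (Nat.choose k (k / 2) : ℚ) else 0) * P = 0 := by
  set F : PowerSeries ℚ := PowerSeries.mk fun k =>
        if Even k ∧ k ≠ 0 then (Nat.choose k (k / 2) : ℚ) else 0 with hFdef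
  have hunit : IsUnit f := isUnit_iff_constantCoeff.mpr (by rw [hf0]; exact isUnit_one)
  have hFg : F = gser - 1 := by
    ext n
    match n with
    | 0 => simp [hFdef, gser, coeff_zero_eq_constantCoeff]
    | (n+1) => simp [hFdef, gser, coeff_one]
  -- derivative relation f * f' = -4X
  have hdf : f * (d⁄dX ℚ) f = -4 * X := by
    have h1 : (d⁄dX ℚ) (f ^ 2) = (d⁄dX ℚ) (1 - 4 * X ^ 2) := by rw [hf]
    have hC4 : (4 : ℚ⟦X⟧) = C (4:ℚ) := by simp [map_ofNat]
    rw [pow_two, Derivation.leibniz, smul_eq_mul] at h1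
    have h2 : (d⁄dX ℚ) ((1:ℚ⟦X⟧) - 4*X^2) = -(8*X) := by
      rw [map_sub, Derivation.map_one_eq_zero, hC4, pow_two, Derivation.leibniz,
        Derivation.leibniz, derivative_C, derivative_X]
      simp only [smul_eq_mul]
      rw [← hC4]; ring
    rw [h2] at h1
    have h2ne : (2 : ℚ⟦X⟧) ≠ 0 := fun h => by
      have := congrArg (constantCoeff) h
      rw [map_ofNat, map_zero] at this
      norm_num at this
    apply mul_left_cancel₀ h2ne
    linear_combination h1
  -- f * gser = 1
  have hfg : f * gser = 1 := by
    have hd0 : f ^ 2 * (d⁄dX ℚ) (f * gser) = 0 := by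
      rw [Derivation.leibniz, smul_eq_mul, smul_eq_mul]
      linear_combination (f * (d⁄dX ℚ) gser) * hf + f * gser_ode + (f * gser) * hdf
    have hd : (d⁄dX ℚ) (f * gser) = 0 := ((hunit.pow 2).mul_right_eq_zero).mp hd0
    apply derivative.ext (by rw [hd]; simp)
    rw [map_mul, map_one, hf0, gser_const, one_mul]
  have hfF : f * F = 1 - f := by
    rw [hFg]
    linear_combination hfg
  suffices h : f * (X * (d⁄dX ℚ) P + F * P) = 0 by
    exact (hunit.mul_right_eq_zero).mp h
  have hdP : (d⁄dX ℚ) P = ((1:ℚ)/2) • (d⁄dX ℚ) f := by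
    rw [hP, Derivation.map_smul, map_add, Derivation.map_one_eq_zero, zero_add]
  rw [hdP, hP, smul_eq_C_mul, smul_eq_C_mul]
  linear_combination (C ((1:ℚ)/2) * X) * hdf + (C ((1:ℚ)/2) * (1 + f)) * hfF - (C ((1:ℚ)/2)) * hf
end
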